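/- If κ is a regular cardinal, then u(κ) ≤ u(κ⁺). -/

import Mathlib

open Cardinal Set

universe u v

/-- An ultrafilter is uniform if all of its members have full cardinality. -/
def Uniform {α : Type u} (U : Ultrafilter α) : Prop := ∀ X ∈ U, #X = #α

/-- An ultrafilter `U` over `S` is `l`-decomposable if there is `f : S → l`
such that preimages of sets of size `< l` are not in `U`. -/
def Decomposable {S : Type u} (U : Ultrafilter S) (l : Cardinal.{v}) : Prop :=
  ∃ f : S → l.out, ∀ X : Set l.out, #X < l → f ⁻¹' X ∉ U

/-- The character of an ultrafilter: the least cardinality of a base. -/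
noncomputable def charU {α : Type u} (U : Ultrafilter α) : Cardinal.{u} :=
  sInf {c | ∃ B : Set (Set α), #B = c ∧ (∀ X ∈ B, X ∈ U) ∧ ∀ Y ∈ U, ∃ X ∈ B, X ⊆ Y}

/-- The ultrafilter number at a cardinal `κ`: the minimal character of a
uniform ultrafilter over (a set of size) `κ`. -/
noncomputable def uNumber (κ : Cardinal.{u}) : Cardinal.{u} :=
  sInf {c | ∃ U : Ultrafilter κ.out, Uniform U ∧ charU U = c}

/- ### Auxiliary lemmas -/

/-- A subset of `c.ord.ToType` of size `< c` is bounded, for regular `c`. -/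
lemma bdd_aux {c : Cardinal.{u}} (hc : c.IsRegular) {A : Set c.ord.ToType}
    (hA : #A < c) : ∃ b, ∀ a ∈ A, a < b := by
  haveI : IsWellOrder c.ord.ToType (· < ·) := isWellOrder_lt
  by_contra! h
  have hcof : IsCofinal A := fun b => by obtain ⟨a, ha, hba⟩ := h b; exact ⟨a, ha, hba⟩
  have hle := Order.cof_le hcof
  rw [Ordinal.cof_toType, hc.cof_eq] at hle
  exact absurd hA (not_lt.mpr hle)

/-- Initial segments of `c.ord.ToType` have size `< c`. -/
lemma seg_aux {c : Cardinal.{u}} (b : c.ord.ToType) : #(Set.Iio b) < c := by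
  haveI : IsWellOrder c.ord.ToType (· < ·) := isWellOrder_lt
  have h1 := Ordinal.typein_lt_type ((· < ·) : c.ord.ToType → c.ord.ToType → Prop) b
  rw [Ordinal.type_toType] at h1
  have h2 : #{y : c.ord.ToType // y < b} =
      (Ordinal.typein ((· < ·) : c.ord.ToType → c.ord.ToType → Prop) b).card :=
    Ordinal.card_typein b
  have h3 : #(Set.Iio b) = #{y : c.ord.ToType // y < b} := rfl
  rw [h3, h2]
  exact Cardinal.lt_ord.mp h1

lemma uniform_iff {α : Type u} (U : Ultrafilter α) :
    Uniform U ↔ ∀ X : Set α, #X < #α → X ∉ U := by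
  constructor
  · intro h X hX hXU
    exact hX.ne (h X hXU)
  · intro h X hXU
    exact le_antisymm (Cardinal.mk_set_le X) (not_lt.mp fun hlt => h X hlt hXU)

lemma mk_preimage_equiv {α β : Type u} (e : α ≃ β) (X : Set β) : #(⇑e ⁻¹' X) = #X :=
  le_antisymm (Cardinal.mk_preimage_of_injective _ _ e.injective)
    (Cardinal.mk_preimage_of_subset_range _ _
      (by rw [Equiv.range_eq_univ]; exact Set.subset_univ _))

/-- There is a uniform ultrafilter over any infinite type. -/
lemma exists_uniform {α : Type u} (hα : ℵ₀ ≤ #α) : ∃ U : Ultrafilter α, Uniform U := by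
  let F : Filter α :=
    { sets := {X | #(↥Xᶜ) < #α}
      univ_sets := by
        simp only [Set.mem_setOf_eq, Set.compl_univ]
        rw [Cardinal.mk_emptyCollection]
        exact lt_of_lt_of_le Cardinal.aleph0_pos hα
      sets_of_superset := by
        intro X Y hX hXY
        simp only [Set.mem_setOf_eq] at *
        exact lt_of_le_of_lt (Cardinal.mk_le_mk_of_subset (Set.compl_subset_compl.mpr hXY)) hX
      inter_sets := by
        intro X Y hX hY
        simp only [Set.mem_setOf_eq] at *
        rw [Set.compl_inter]
        exact lt_of_le_of_lt (Cardinal.mk_union_le _ _) (Cardinal.add_lt_of_lt hα hX hY) }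
  have hmemF : ∀ X : Set α, X ∈ F ↔ #(↥Xᶜ) < #α := fun X => Iff.rfl
  have hne : F.NeBot := by
    constructor
    intro h
    have h0 : (∅ : Set α) ∈ F := by rw [h]; exact Filter.mem_bot
    rw [hmemF] at h0
    rw [Set.compl_empty, Cardinal.mk_univ] at h0
    exact lt_irrefl _ h0
  refine ⟨Ultrafilter.of F, (uniform_iff _).mpr fun X hX hXU => ?_⟩
  have hc : Xᶜ ∈ Ultrafilter.of F := by
    refine Ultrafilter.of_le F ?_
    rw [hmemF, compl_compl]
    exact hX
  exact (Ultrafilter.compl_mem_iff_notMem.mp hc) hXU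

lemma charU_spec {α : Type u} (U : Ultrafilter α) :
    ∃ B : Set (Set α), #B = charU U ∧ (∀ X ∈ B, X ∈ U) ∧ ∀ Y ∈ U, ∃ X ∈ B, X ⊆ Y := by
  have hne : {c | ∃ B : Set (Set α), #B = c ∧ (∀ X ∈ B, X ∈ U) ∧
      ∀ Y ∈ U, ∃ X ∈ B, X ⊆ Y}.Nonempty :=
    ⟨#{X : Set α | X ∈ U}, {X | X ∈ U}, rfl, fun _ hX => hX, fun Y hY => ⟨Y, hY, subset_rfl⟩⟩
  exact csInf_mem hne

lemma charU_map_le {α β : Type u} (f : α → β) (U : Ultrafilter α) :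
    charU (U.map f) ≤ charU U := by
  obtain ⟨B, hBcard, hBmem, hBbase⟩ := charU_spec U
  have hmem : charU (U.map f) ≤ #((Set.image f) '' B) := by
    refine csInf_le' ⟨(Set.image f) '' B, rfl, ?_, ?_⟩
    · rintro X ⟨Y, hY, rfl⟩
      exact Ultrafilter.mem_map.mpr
        (Filter.mem_of_superset (hBmem Y hY) (Set.subset_preimage_image f Y))
    · intro Y hY
      obtain ⟨X, hXB, hXsub⟩ := hBbase _ (Ultrafilter.mem_map.mp hY)
      exact ⟨f '' X, Set.mem_image_of_mem _ hXB,
        (Set.image_mono hXsub).trans (Set.image_preimage_subset f Y)⟩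
  exact hmem.trans (le_of_le_of_eq Cardinal.mk_image_le hBcard)

/-- Every uniform ultrafilter over `κ⁺` is `κ`-decomposable (κ regular). -/
lemma decomp {κ : Cardinal.{u}} (hκ : κ.IsRegular)
    (U : Ultrafilter (Order.succ κ).ord.ToType)
    (hU : ∀ X : Set (Order.succ κ).ord.ToType, #X < Order.succ κ → X ∉ U) :
    ∃ f : (Order.succ κ).ord.ToType → κ.ord.ToType,
      ∀ X : Set κ.ord.ToType, #X < κ → f ⁻¹' X ∉ U := by
  have hμreg : (Order.succ κ).IsRegular := Cardinal.isRegular_succ hκ.aleph0_le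
  have hmkL : #(Order.succ κ).ord.ToType = Order.succ κ := Cardinal.mk_ord_toType _
  have hmkK : #κ.ord.ToType = κ := Cardinal.mk_ord_toType κ
  have interU : ∀ {s t : Set (Order.succ κ).ord.ToType}, s ∈ U → t ∈ U → s ∩ t ∈ U :=
    fun hs ht => Ultrafilter.mem_coe.mp (Filter.inter_mem (Ultrafilter.mem_coe.mpr hs)
      (Ultrafilter.mem_coe.mpr ht))
  have hKne : Nonempty κ.ord.ToType := by
    have h : #κ.ord.ToType ≠ 0 := by
      rw [hmkK]; exact (Cardinal.aleph0_pos.trans_le hκ.aleph0_le).ne'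
    exact Cardinal.mk_ne_zero_iff.mp h
  obtain ⟨k0⟩ := hKne
  have hemb : ∀ b : (Order.succ κ).ord.ToType, Nonempty (↥(Set.Iio b) ↪ κ.ord.ToType) := by
    intro b
    refine (Cardinal.le_def _ _).mp ?_
    rw [hmkK]
    exact Order.lt_succ_iff.mp (seg_aux b)
  let e : ∀ b : (Order.succ κ).ord.ToType, ↥(Set.Iio b) ↪ κ.ord.ToType :=
    fun b => (hemb b).some
  let F : (Order.succ κ).ord.ToType → (Order.succ κ).ord.ToType → κ.ord.ToType :=
    fun a b => if h : a < b then e b ⟨a, h⟩ else k0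
  by_cases hcase : ∃ a : (Order.succ κ).ord.ToType,
      ∀ X : Set κ.ord.ToType, #X < κ → (F a) ⁻¹' X ∉ U
  · obtain ⟨a, ha⟩ := hcase
    exact ⟨F a, ha⟩
  push_neg at hcase
  choose X hXsmall hXU using hcase
  choose γbd hγbd using fun a => bdd_aux hκ (hXsmall a)
  have htail : ∀ a : (Order.succ κ).ord.ToType,
      {b : (Order.succ κ).ord.ToType | a < b} ∈ U := by
    intro a
    have h1 : #(Set.Iic a) < Order.succ κ := by
      have hsub : Set.Iic a ⊆ Set.Iio a ∪ {a} := by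
        intro x hx
        rcases lt_or_eq_of_le (Set.mem_Iic.mp hx) with h | h
        · exact Or.inl h
        · exact Or.inr (by simp [h])
      calc #(Set.Iic a)
          ≤ #((Set.Iio a ∪ {a} : Set (Order.succ κ).ord.ToType)) :=
            Cardinal.mk_le_mk_of_subset hsub
        _ ≤ #(Set.Iio a) + #({a} : Set (Order.succ κ).ord.ToType) := Cardinal.mk_union_le _ _
        _ < Order.succ κ := Cardinal.add_lt_of_lt hμreg.aleph0_le (seg_aux a)
            (by rw [Cardinal.mk_singleton]
                exact lt_of_lt_of_le Cardinal.one_lt_aleph0 hμreg.aleph0_le)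
    have h2 : {b : (Order.succ κ).ord.ToType | a < b} = (Set.Iic a)ᶜ := by
      ext x
      simp [not_le]
    rw [h2]
    exact Ultrafilter.compl_mem_iff_notMem.mpr (hU _ h1)
  have hBU : ∀ a : (Order.succ κ).ord.ToType,
      (F a) ⁻¹' (X a) ∩ {b : (Order.succ κ).ord.ToType | a < b} ∈ U := fun a =>
    interU (hXU a) (htail a)
  have h1L : ℵ₀ ≤ #(Order.succ κ).ord.ToType := by rw [hmkL]; exact hμreg.aleph0_le
  have h2L : #κ.ord.ToType < (#(Order.succ κ).ord.ToType).ord.cof := by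
    rw [hmkK, hmkL, hμreg.cof_eq]
    exact Order.lt_succ κ
  obtain ⟨γs, hγs⟩ := Cardinal.infinite_pigeonhole γbd h1L h2L
  have hTemb : Nonempty (κ.ord.ToType ↪ ↥(γbd ⁻¹' {γs})) := by
    refine (Cardinal.le_def _ _).mp ?_
    rw [hmkK, hγs, hmkL]
    exact (Order.lt_succ κ).le
  obtain ⟨T⟩ := hTemb
  let A : κ.ord.ToType → (Order.succ κ).ord.ToType := fun i => (T i : (Order.succ κ).ord.ToType)
  have hAinj : Function.Injective A := fun i j h => T.injective (Subtype.ext h)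
  have hAfib : ∀ i, γbd (A i) = γs := fun i => (T i).2
  have hSb : ∀ b : (Order.succ κ).ord.ToType, ∃ gb : κ.ord.ToType,
      ∀ i : κ.ord.ToType,
        b ∈ (F (A i)) ⁻¹' (X (A i)) ∩ {x : (Order.succ κ).ord.ToType | A i < x} → i < gb := by
    intro b
    have hcard : #{i : κ.ord.ToType |
        b ∈ (F (A i)) ⁻¹' (X (A i)) ∩ {x : (Order.succ κ).ord.ToType | A i < x}} < κ := by
      have hφ : ∃ φ : ↥{i : κ.ord.ToType |
          b ∈ (F (A i)) ⁻¹' (X (A i)) ∩ {x : (Order.succ κ).ord.ToType | A i < x}} →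
          ↥(Set.Iio γs), Function.Injective φ := by
        have hlt : ∀ i : ↥{i : κ.ord.ToType |
            b ∈ (F (A i)) ⁻¹' (X (A i)) ∩ {x : (Order.succ κ).ord.ToType | A i < x}},
            A i.1 < b := fun i => i.2.2
        have hmm : ∀ i : ↥{i : κ.ord.ToType |
            b ∈ (F (A i)) ⁻¹' (X (A i)) ∩ {x : (Order.succ κ).ord.ToType | A i < x}},
            F (A i.1) b ∈ X (A i.1) := fun i => i.2.1
        refine ⟨fun i => ⟨F (A i.1) b, ?_⟩, ?_⟩
        · have h := hγbd (A i.1) _ (hmm i)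
          rw [hAfib] at h
          exact h
        · intro i j hij
          have hval : F (A i.1) b = F (A j.1) b := congrArg Subtype.val hij
          rw [show F (A i.1) b = e b ⟨A i.1, hlt i⟩ from dif_pos (hlt i),
              show F (A j.1) b = e b ⟨A j.1, hlt j⟩ from dif_pos (hlt j)] at hval
          have h1 := (e b).injective hval
          have h2 := congrArg Subtype.val h1
          exact Subtype.ext (hAinj h2)
      obtain ⟨φ, hφinj⟩ := hφ
      exact lt_of_le_of_lt (Cardinal.mk_le_of_injective hφinj) (seg_aux γs)
    obtain ⟨gb, hgb⟩ := bdd_aux hκ hcard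
    exact ⟨gb, fun i hi => hgb i hi⟩
  choose g hg using hSb
  refine ⟨g, ?_⟩
  intro Y hY hYU
  obtain ⟨i0, hi0⟩ := bdd_aux hκ hY
  have hmem2 : g ⁻¹' Y ∩
      ((F (A i0)) ⁻¹' (X (A i0)) ∩ {x : (Order.succ κ).ord.ToType | A i0 < x}) ∈ U :=
    interU hYU (hBU (A i0))
  obtain ⟨b, hb1, hb2⟩ := Ultrafilter.nonempty_of_mem hmem2
  exact lt_asymm (hg b i0 hb2) (hi0 _ hb1)

/-- If `κ` is regular then `u(κ) ≤ u(κ⁺)`. -/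
theorem stmt9 (κ : Cardinal.{u}) (hκ : κ.IsRegular) :
    uNumber κ ≤ uNumber (Order.succ κ) := by
  have hμreg : (Order.succ κ).IsRegular := Cardinal.isRegular_succ hκ.aleph0_le
  have hne : {c | ∃ U : Ultrafilter (Order.succ κ).out, Uniform U ∧ charU U = c}.Nonempty := by
    obtain ⟨U, hU⟩ := exists_uniform (α := (Order.succ κ).out)
      (by rw [Cardinal.mk_out]; exact hμreg.aleph0_le)
    exact ⟨charU U, U, hU, rfl⟩
  have hmem : uNumber (Order.succ κ) ∈ {c | ∃ U : Ultrafilter (Order.succ κ).out,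
      Uniform U ∧ charU U = c} := csInf_mem hne
  obtain ⟨U, hUuni, hUchar⟩ := hmem
  have heμ : Nonempty ((Order.succ κ).out ≃ (Order.succ κ).ord.ToType) := by
    rw [← Cardinal.eq, Cardinal.mk_out, Cardinal.mk_ord_toType]
  obtain ⟨eμ⟩ := heμ
  have heκ : Nonempty (κ.ord.ToType ≃ κ.out) := by
    rw [← Cardinal.eq, Cardinal.mk_out, Cardinal.mk_ord_toType]
  obtain ⟨eκ⟩ := heκ
  set U1 : Ultrafilter (Order.succ κ).ord.ToType := U.map eμ with hU1
  have hU1uni : ∀ X : Set (Order.succ κ).ord.ToType, #X < Order.succ κ → X ∉ U1 := by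
    intro X hX hXU
    have h := hUuni _ (Ultrafilter.mem_map.mp hXU)
    rw [_root_.mk_preimage_equiv, Cardinal.mk_out] at h
    exact hX.ne h
  obtain ⟨f, hf⟩ := decomp hκ U1 hU1uni
  set V : Ultrafilter κ.out := (U1.map f).map eκ with hV
  have hVuni : Uniform V := by
    rw [uniform_iff]
    intro X hX hXU
    rw [Cardinal.mk_out] at hX
    have h1 : ⇑eκ ⁻¹' X ∈ U1.map f := Ultrafilter.mem_map.mp hXU
    have h2 : f ⁻¹' (⇑eκ ⁻¹' X) ∈ U1 := Ultrafilter.mem_map.mp h1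
    exact hf _ (by rw [_root_.mk_preimage_equiv]; exact hX) h2
  calc uNumber κ ≤ charU V := csInf_le' ⟨V, hVuni, rfl⟩
    _ ≤ charU (U1.map f) := charU_map_le _ _
    _ ≤ charU U1 := charU_map_le _ _
    _ ≤ charU U := charU_map_le _ _
    _ = uNumber (Order.succ κ) := hUchar
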